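/- arXiv:2410.06197 — 4 statements merged into one kernel-verified Lean document; each statement's English description precedes it below -/
import Mathlib

section
/- Let A₀ and A₁ be finitely generated abelian groups and let f : A₀ → A₁ be a surjective group homomorphism. Assume that for every prime p and every integer r ≥ 1, f maps the p^r-torsion subgroup {a ∈ A₀ : p^r • a = 0} onto the p^r-torsion subgroup {b ∈ A₁ : p^r • b = 0}. Then f is a split epimorphism: there exists a group homomorphism s : A₁ → A₀ with f ∘ s = id on A₁. -/
open DirectSum
/-- **Splitting criterion for surjections of finitely generated abelian groups**
(used in the proof of Theorem 1.1, integral Kirwan surjectivity):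
if a surjection `f : A₀ → A₁` of finitely generated abelian groups maps the
`p^r`-torsion subgroup of `A₀` onto the `p^r`-torsion subgroup of `A₁` for every
prime `p` and every `r ≥ 1`, then `f` is a split epimorphism. -/
theorem kirwan_splitting_criterion {A₀ A₁ : Type*} [AddCommGroup A₀] [AddCommGroup A₁]
    [AddGroup.FG A₀] [AddGroup.FG A₁]
    (f : A₀ →+ A₁) (hf : Function.Surjective f)
    (htor : ∀ p r : ℕ, p.Prime → 1 ≤ r →
      ∀ b : A₁, p ^ r • b = 0 → ∃ a : A₀, p ^ r • a = 0 ∧ f a = b) :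
    ∃ s : A₁ →+ A₀, ∀ b : A₁, f (s b) = b := by
  classical
  obtain ⟨n, ι, hι, p, hp, e, ⟨φ⟩⟩ := AddCommGroup.equiv_free_prod_directSum_zmod A₁
  -- lifts of the free generators
  choose g hg using fun i : Fin n => hf (φ.symm (Finsupp.single i 1, 0))
  -- torsion generators
  set b : ι → A₁ := fun i =>
    φ.symm (0, DirectSum.of (fun i => ZMod (p i ^ e i)) i 1) with hbdef
  have hbtor : ∀ i, p i ^ e i • b i = 0 := by
    intro i
    rw [hbdef]
    rw [← map_nsmul, ← map_zero φ.symm]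
    congr 1
    rw [Prod.smul_mk, smul_zero, ← map_nsmul]
    have h1 : (p i ^ e i) • (1 : ZMod (p i ^ e i)) = 0 := by
      simp [nsmul_eq_mul]
    rw [h1, map_zero]
    rfl
  have ha : ∀ i, ∃ a : A₀, p i ^ e i • a = 0 ∧ f a = b i := by
    intro i
    rcases Nat.eq_zero_or_pos (e i) with h0 | h1
    · refine ⟨0, smul_zero _, ?_⟩
      have hsub : Subsingleton (ZMod (p i ^ e i)) := by
        rw [h0, pow_zero]; infer_instance
      have h1 : (1 : ZMod (p i ^ e i)) = 0 := @Subsingleton.elim _ hsub _ _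
      rw [hbdef]
      simp only [h1, map_zero]
      simp [Prod.mk_zero_zero]
    · exact htor (p i) (e i) (hp i) h1 (b i) (hbtor i)
  choose a hator haf using ha
  -- component maps
  have hcond : ∀ i, zmultiplesHom A₀ (a i) ((p i ^ e i : ℕ) : ℤ) = 0 := by
    intro i
    show ((p i ^ e i : ℕ) : ℤ) • a i = 0
    rw [natCast_zsmul]
    exact hator i
  let c : ∀ i, ZMod (p i ^ e i) →+ A₀ := fun i =>
    ZMod.lift (p i ^ e i) ⟨zmultiplesHom A₀ (a i), hcond i⟩
  let t₁ : (Fin n →₀ ℤ) →+ A₀ := Finsupp.liftAddHom (fun i => zmultiplesHom A₀ (g i))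
  let t₂ : (⨁ i : ι, ZMod (p i ^ e i)) →+ A₀ := DirectSum.toAddMonoid c
  have ht₁ : ∀ x, f (t₁ x) = φ.symm (x, 0) := by
    intro x
    induction x using Finsupp.induction with
    | zero => simp [t₁, Prod.mk_zero_zero]
    | single_add i k x _ _ ih =>
      rw [map_add, map_add]
      have : f (t₁ (Finsupp.single i k)) = φ.symm (Finsupp.single i k, 0) := by
        have ht : t₁ (Finsupp.single i k) = k • g i := by
          simp [t₁, zmultiplesHom_apply]
        rw [ht, map_zsmul, hg i, ← map_zsmul]
        congr 1
        rw [Prod.smul_mk, smul_zero, Finsupp.smul_single, smul_eq_mul, mul_one]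
      rw [this, ih, ← map_add]
      congr 1
      simp
  have ht₂ : ∀ y, f (t₂ y) = φ.symm (0, y) := by
    intro y
    induction y using DirectSum.induction_on with
    | zero => simp [t₂, Prod.mk_zero_zero]
    | of i x =>
      obtain ⟨k, rfl⟩ := ZMod.intCast_surjective x
      have ht : t₂ (DirectSum.of (fun i => ZMod (p i ^ e i)) i ((k : ZMod (p i ^ e i)))) = k • a i := by
        simp only [t₂, DirectSum.toAddMonoid_of]
        rw [show c i = ZMod.lift (p i ^ e i) ⟨zmultiplesHom A₀ (a i), hcond i⟩ from rfl,
          ZMod.lift_coe]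
        simp [zmultiplesHom_apply]
      rw [ht, map_zsmul, haf i, hbdef, ← map_zsmul]
      congr 1
      rw [Prod.smul_mk, smul_zero, ← map_zsmul]
      congr 1
      rw [zsmul_one]
    | add x y hx hy =>
      rw [map_add, map_add, hx, hy, ← map_add]
      congr 1
  refine ⟨(t₁.coprod t₂).comp φ.toAddMonoidHom, fun x => ?_⟩
  have : ∀ z : (Fin n →₀ ℤ) × (⨁ i : ι, ZMod (p i ^ e i)),
      f ((t₁.coprod t₂) z) = φ.symm z := by
    rintro ⟨x, y⟩
    rw [AddMonoidHom.coprod_apply, map_add, ht₁, ht₂, ← map_add]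
    congr 1
    simp
  simpa using this (φ x)
end

section
/- Let f : A → B be a homomorphism of abelian groups and assume B is finitely generated. Suppose that for every prime p and every integer r ≥ 1, the induced map A/p^r A → B/p^r B is surjective; equivalently, every element of B is congruent modulo the subgroup p^r • B to an element of the image of f. Then f is surjective. -/
/-- If `f : A → B` is a homomorphism of abelian groups with `B` finitely generated, and for
every prime `p` and every `r ≥ 1` the induced map `A/p^r A → B/p^r B` is surjective
(i.e. every `b : B` can be written as `f a + p^r • c`), then `f` is surjective.
(This is the step in the proof of Theorem 1.1 deducing surjectivity of the integral Kirwan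
map from surjectivity of the mod `p^r` Kirwan maps.) -/
theorem surjective_of_surjective_mod_prime_powers {A B : Type*} [AddCommGroup A]
    [AddCommGroup B] [AddGroup.FG B] (f : A →+ B)
    (h : ∀ p r : ℕ, p.Prime → 1 ≤ r → ∀ b : B, ∃ a : A, ∃ c : B, b = f a + p ^ r • c) :
    Function.Surjective f := by
  have hfin : Module.Finite ℤ B := Module.Finite.iff_addGroup_fg.mpr ‹_›
  have hNoeth : IsNoetherian ℤ B := inferInstance
  by_contra hns
  set fl := f.toIntLinearMap with hfl
  have hR : LinearMap.range fl ≠ ⊤ := by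
    intro hr
    exact hns (LinearMap.range_eq_top (f := fl) |>.mp hr)
  have hco : IsCoatomic (Submodule ℤ B) :=
    isCoatomic_of_orderTop_gt_wellFounded (IsWellFounded.wf)
  obtain ⟨N, hN, hle⟩ := (hco.eq_top_or_exists_le_coatom (LinearMap.range fl)).resolve_left hR
  have hsimple : IsSimpleModule ℤ (B ⧸ N) := isSimpleModule_iff_isCoatom.mpr hN
  set I := Module.annihilator ℤ (B ⧸ N) with hI
  have hImax : I.IsMaximal := IsSimpleModule.annihilator_isMaximal
  have hIprime : I.IsPrime := hImax.isPrime
  have hIbot : I ≠ ⊥ := by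
    intro hbot
    have h2 : (⊥ : Ideal ℤ) < Ideal.span {(2 : ℤ)} := by
      refine lt_of_le_of_ne bot_le ?_
      intro hsp
      have : (2 : ℤ) ∈ Ideal.span ({(2 : ℤ)} : Set ℤ) := Ideal.subset_span rfl
      rw [← hsp] at this
      simp at this
    have := hImax.1.2 _ (hbot ▸ h2)
    rw [Ideal.span_singleton_eq_top, Int.isUnit_iff] at this
    omega
  have hprinc : I.IsPrincipal := IsPrincipalIdealRing.principal I
  set g := Submodule.IsPrincipal.generator I with hg
  have hgprime : Prime g := Submodule.IsPrincipal.prime_generator_of_isPrime I hIbot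
  set p := g.natAbs with hp
  have hpp : p.Prime := Int.prime_iff_natAbs_prime.mp hgprime
  have hpI : (p : ℤ) ∈ I := by
    rw [← Ideal.span_singleton_generator I]
    exact Ideal.mem_span_singleton.mpr (Int.dvd_natAbs.mpr dvd_rfl)
  have hNtop : N = ⊤ := by
    rw [eq_top_iff]
    intro b _
    obtain ⟨a, c, hb⟩ := h p 1 hpp le_rfl b
    rw [← Submodule.Quotient.mk_eq_zero, hb]
    have h1 : Submodule.Quotient.mk (p := N) (f a) = 0 :=
      (Submodule.Quotient.mk_eq_zero N).mpr (hle ⟨a, rfl⟩)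
    have h2 : Submodule.Quotient.mk (p := N) (p ^ 1 • c)
        = (p : ℤ) • Submodule.Quotient.mk (p := N) c := by
      rw [pow_one, ← Submodule.Quotient.mk_smul]
      norm_cast
    rw [Submodule.Quotient.mk_add, h1, h2, Module.mem_annihilator.mp hpI, zero_add]
  exact hN.1 hNtop
end

section
/- Let A be a commutative ring, f ∈ A[[u]] a formal power series, and 0 = J₀ ⊆ J₁ ⊆ … ⊆ J_t = A a chain of ideals of A. Let k₁, …, k_t be natural numbers and assume for each j ∈ {1, …, t} and each natural number N: whenever x ∈ A[[u]] has all its coefficients in J_j and all coefficients of f · x in degrees < N lie in J_{j−1}, then all coefficients of x in degrees < N − k_j lie in J_{j−1}. Then for every natural number M and every ν ∈ A[[u]] such that all coefficients of f · ν vanish in degrees < M, all coefficients of ν vanish in degrees < M − (k₁ + … + k_t); that is, the kernel of multiplication by f from A[[u]] to A[[u]]/(u^M) is contained in the ideal (u^{M − Σ_j k_j}). -/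
/-!
Descend the chain of ideals: if the coefficients of `ν` below `N` lie in `J m` and `f * ν`
vanishes below `M ≥ N`, then applying the slice bound for `J (m - 1) ⊆ J m` to the truncation
of `ν` at `N` puts the coefficients of `ν` below `N - k m` into `J (m - 1)`. After `t` steps
they lie in `J 0 = 0`, and the truncation orders have dropped by `k₁ + ⋯ + k_t` in total.
-/

open Finset

namespace PowerSeries

variable {A : Type*} [CommRing A]

theorem coeff_mul_trunc_of_lt (f g : A⟦X⟧) {i N : ℕ} (h : i < N) :
    coeff i (f * (trunc N g : A⟦X⟧)) = coeff i (f * g) := by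
  rw [← coeff_coe_trunc_of_lt h, trunc_mul_trunc, coeff_coe_trunc_of_lt h]

theorem coeff_mem_of_slice_bound {f ν : A⟦X⟧} {I I' : Ideal A} {κ N : ℕ}
    (hslice : ∀ x : A⟦X⟧, (∀ i, coeff i x ∈ I) →
      (∀ i < N, coeff i (f * x) ∈ I') → ∀ i < N - κ, coeff i x ∈ I')
    (hν : ∀ i < N, coeff i ν ∈ I) (hfν : ∀ i < N, coeff i (f * ν) ∈ I') :
    ∀ i < N - κ, coeff i ν ∈ I' := by
  have htrunc_mem : ∀ i, coeff i (trunc N ν : A⟦X⟧) ∈ I := fun i => by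
    rw [Polynomial.coeff_coe, coeff_trunc]
    split_ifs with hi
    exacts [hν i hi, I.zero_mem]
  intro i hi
  rw [← coeff_coe_trunc_of_lt (lt_of_lt_of_le hi (N.sub_le κ))]
  refine hslice _ htrunc_mem (fun i hi => ?_) i hi
  rw [coeff_mul_trunc_of_lt f ν hi]
  exact hfν i hi

theorem coeff_mem_of_slice_bounds {f ν : A⟦X⟧} {t M : ℕ} {J : ℕ → Ideal A} {k : ℕ → ℕ}
    (hJt : J t = ⊤)
    (hslice : ∀ j : ℕ, 1 ≤ j → j ≤ t → ∀ N : ℕ, ∀ x : A⟦X⟧,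
      (∀ i : ℕ, coeff i x ∈ J j) →
      (∀ i < N, coeff i (f * x) ∈ J (j - 1)) →
      ∀ i < N - k j, coeff i x ∈ J (j - 1))
    (hfν : ∀ i < M, coeff i (f * ν) = 0) {m : ℕ} (hm : m ≤ t) :
    ∀ i < M - ∑ j ∈ Ioc m t, k j, coeff i ν ∈ J m := by
  induction hm using Nat.decreasingInduction with
  | self => simp [hJt]
  | of_succ m hmt ih =>
    have hsum : ∑ j ∈ Ioc m t, k j = k (m + 1) + ∑ j ∈ Ioc (m + 1) t, k j := by
      rw [← sum_Ioc_consecutive _ m.le_succ hmt, Nat.Ioc_succ_singleton, sum_singleton]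
    rw [hsum, add_comm, ← Nat.sub_sub]
    refine coeff_mem_of_slice_bound (hslice (m + 1) m.succ_pos hmt _) ih fun i hi => ?_
    rw [hfν i (lt_of_lt_of_le hi (Nat.sub_le _ _))]
    exact zero_mem _

end PowerSeries

theorem devissage_kernel_order_bound_general {A : Type*} [CommRing A] (f : PowerSeries A)
    (t : ℕ) (J : ℕ → Ideal A) (hJ0 : J 0 = ⊥) (hJt : J t = ⊤)
    (k : ℕ → ℕ)
    (hslice : ∀ j : ℕ, 1 ≤ j → j ≤ t → ∀ N : ℕ, ∀ x : PowerSeries A,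
      (∀ i : ℕ, PowerSeries.coeff i x ∈ J j) →
      (∀ i < N, PowerSeries.coeff i (f * x) ∈ J (j - 1)) →
      ∀ i < N - k j, PowerSeries.coeff i x ∈ J (j - 1)) :
    ∀ M : ℕ, ∀ ν : PowerSeries A,
      (∀ i < M, PowerSeries.coeff i (f * ν) = 0) →
      ∀ i < M - ∑ j ∈ Finset.Icc 1 t, k j, PowerSeries.coeff i ν = 0 := by
  intro M ν hfν i hi
  rw [← zero_add 1, Icc_add_one_left_eq_Ioc] at hi
  simpa [hJ0] using PowerSeries.coeff_mem_of_slice_bounds hJt hslice hfν t.zero_le i hi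

/-- **Dévissage for kernel-order bounds (Proposition A.1, effective Atiyah–Bott lemma for
`BP`)**: given a finite chain of ideals `0 = J₀ ⊆ J₁ ⊆ ⋯ ⊆ J_t = A` of a commutative ring
`A` and a power series `f ∈ A[[u]]` such that multiplication by `f` on each successive
slice has kernel-order bound `k_j` (for all truncations `N`), the kernel of multiplication
by `f` from `A[[u]]` to `A[[u]]/(u^M)` is contained in `(u^{M - (k₁ + ⋯ + k_t)})`. -/
theorem devissage_kernel_order_bound {A : Type*} [CommRing A] (f : PowerSeries A)
    (t : ℕ) (J : ℕ → Ideal A) (hJ0 : J 0 = ⊥) (hJt : J t = ⊤)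
    (hchain : ∀ j : ℕ, 1 ≤ j → j ≤ t → J (j - 1) ≤ J j)
    (k : ℕ → ℕ)
    (hslice : ∀ j : ℕ, 1 ≤ j → j ≤ t → ∀ N : ℕ, ∀ x : PowerSeries A,
      (∀ i : ℕ, PowerSeries.coeff i x ∈ J j) →
      (∀ i < N, PowerSeries.coeff i (f * x) ∈ J (j - 1)) →
      ∀ i < N - k j, PowerSeries.coeff i x ∈ J (j - 1)) :
    ∀ M : ℕ, ∀ ν : PowerSeries A,
      (∀ i < M, PowerSeries.coeff i (f * ν) = 0) →
      ∀ i < M - ∑ j ∈ Finset.Icc 1 t, k j, PowerSeries.coeff i ν = 0 :=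
  devissage_kernel_order_bound_general f t J hJ0 hJt k hslice
end

section
/- Let A be a commutative ring, let q ≥ 1 be an integer, and let c, r be natural numbers with r ≥ (q−1)·c. Let λ ∈ A[[u]] be a power series with zero constant coefficient satisfying the following kernel-order property: for every natural number N with 1 ≤ N ≤ r+1 and every x ∈ A[[u]], if all coefficients of λ · x vanish in degrees < N, then all coefficients of x vanish in degrees < N − c. Let ω ∈ A with ω^q = 0, let β ∈ A[[u]], and let α ∈ A be such that all coefficients of the power series α − β · (λ + ω) vanish in degrees < r + 1, where α and ω are regarded as constant power series. Then α = 0. -/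
/-!
Write `ω` also for the constant series `C ω`. By descending induction on `m ≤ q` we show
`α ω^m = 0`; the case `m = 0` is the claim and `m = q` holds since `ω^q = 0`. For the step,
put `a = α ω^m` with `a ω = 0`, `t = q - 1 - m`, and multiply the congruence
`a ≡ β ω^m (λ + ω) mod u^{r+1}` by the geometric sum `τ = Σ_{i ≤ t} λ^i (-ω)^{t-i}`.
Since `a ω = 0` we get `a τ = a λ^t`, and since `τ (λ + ω) = λ^{t+1} - (-ω)^{t+1}` and
`ω^{m+t+1} = 0`, the congruence becomes `λ^t (a - β ω^m λ) ≡ 0 mod u^{r+1}`. Applying the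
kernel bound `t` times leaves `a - β ω^m λ ≡ 0 mod u^{r+1-tc}`, with `r + 1 - tc ≥ 1`; the
constant coefficient of the left side is `a`, because `λ` has none.
-/

open PowerSeries

namespace PowerSeries

variable {R : Type*} [CommRing R]

theorem X_pow_dvd_of_X_pow_dvd_pow_mul {lam : R⟦X⟧} {c M : ℕ}
    (hker : ∀ N, 1 ≤ N → N ≤ M → ∀ x : R⟦X⟧, X ^ N ∣ lam * x → X ^ (N - c) ∣ x)
    {j : ℕ} (hj : j * c < M) {x : R⟦X⟧} (h : X ^ M ∣ lam ^ j * x) :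
    X ^ (M - j * c) ∣ x := by
  induction j generalizing x with
  | zero => simpa using h
  | succ j ih =>
    rw [Nat.succ_mul] at hj
    have hlam_x : X ^ (M - j * c) ∣ lam * x :=
      ih (by omega) (by rwa [pow_succ, mul_assoc] at h)
    have := hker (M - j * c) (by omega) (Nat.sub_le _ _) x hlam_x
    rwa [Nat.sub_sub, ← Nat.succ_mul] at this

theorem mul_geom_sum₂_of_mul_eq_zero {a x y : R} (ha : a * y = 0) (n : ℕ) :
    a * ∑ i ∈ Finset.range (n + 1), x ^ i * y ^ (n - i) = a * x ^ n := by
  rw [geom_sum₂_succ_eq, mul_add, ← mul_assoc, ha, zero_mul, add_zero]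

theorem eq_zero_of_X_pow_dvd_C_sub_mul_add_C {lam : R⟦X⟧} (hlam : constantCoeff lam = 0)
    {c M : ℕ} (hker : ∀ N, 1 ≤ N → N ≤ M → ∀ x : R⟦X⟧, X ^ N ∣ lam * x → X ^ (N - c) ∣ x)
    {a ω : R} (ha : a * ω = 0) {γ : R⟦X⟧} {t : ℕ} (hγ : γ * C ω ^ (t + 1) = 0)
    (htc : t * c < M) (h : X ^ M ∣ C a - γ * (lam + C ω)) : a = 0 := by
  set τ := ∑ i ∈ Finset.range (t + 1), lam ^ i * (-C ω) ^ (t - i)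
  have hCa : C a * τ = C a * lam ^ t :=
    mul_geom_sum₂_of_mul_eq_zero (by rw [mul_neg, ← map_mul, ha, map_zero, neg_zero]) t
  have hτ : τ * (lam + C ω) = lam ^ (t + 1) - (-C ω) ^ (t + 1) := by
    simpa only [sub_neg_eq_add, Nat.add_sub_cancel] using geom_sum₂_mul lam (-C ω) (t + 1)
  have hγ' : γ * (-C ω) ^ (t + 1) = 0 := by rw [neg_pow, mul_left_comm, hγ, mul_zero]
  have hmul : (C a - γ * (lam + C ω)) * τ = lam ^ t * (C a - γ * lam) := by
    linear_combination hCa - γ * hτ + hγ'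
  have hdvd : X ^ (M - t * c) ∣ C a - γ * lam := by
    refine X_pow_dvd_of_X_pow_dvd_pow_mul hker htc ?_
    rw [← hmul]
    exact dvd_mul_of_dvd_left h τ
  have hconst := X_dvd_iff.mp ((dvd_pow_self X (by omega : M - t * c ≠ 0)).trans hdvd)
  rwa [map_sub, map_mul, constantCoeff_C, hlam, mul_zero, sub_zero] at hconst

end PowerSeries

theorem lens_space_pullback_injectivity_general {A : Type*} [CommRing A]
    (q : ℕ) (c r : ℕ) (hr : (q - 1) * c ≤ r)
    (lam : PowerSeries A) (hlam : PowerSeries.constantCoeff (R := A) lam = 0)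
    (hker : ∀ N : ℕ, 1 ≤ N → N ≤ r + 1 → ∀ x : PowerSeries A,
      (∀ i < N, PowerSeries.coeff (R := A) i (lam * x) = 0) →
      ∀ i < N - c, PowerSeries.coeff (R := A) i x = 0)
    (ω : A) (hω : ω ^ q = 0) (β : PowerSeries A) (α : A)
    (hcong : ∀ i < r + 1,
      PowerSeries.coeff (R := A) i
        (PowerSeries.C (R := A) α - β * (lam + PowerSeries.C (R := A) ω)) = 0) :
    α = 0 := by
  simp only [← X_pow_dvd_iff] at hker hcong
  have hdesc : ∀ k ≤ q, α * ω ^ (q - k) = 0 := by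
    intro k hk
    induction k with
    | zero => rw [Nat.sub_zero, hω, mul_zero]
    | succ k ih =>
      have hsucc : q - k = q - (k + 1) + 1 := by omega
      refine eq_zero_of_X_pow_dvd_C_sub_mul_add_C hlam hker (ω := ω) (t := k)
        (γ := β * C (ω ^ (q - (k + 1)))) ?_ ?_ ?_ ?_
      · rw [mul_assoc, ← pow_succ, ← hsucc, ih (by omega)]
      · rw [mul_assoc, ← map_pow, ← map_mul, ← pow_add, show q - (k + 1) + (k + 1) = q by omega,
          hω, map_zero, mul_zero]
      · have : k * c ≤ (q - 1) * c := Nat.mul_le_mul_right c (by omega)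
        omega
      · convert dvd_mul_of_dvd_left hcong (C (ω ^ (q - (k + 1)))) using 1
        rw [map_mul]
        ring
  simpa using hdesc q le_rfl

/-- **The inductive argument of Lemma A.2** (injectivity of pullback along the lens-space
bundle in `BP`-cohomology): let `A` be a commutative ring, `q ≥ 1`, and `r ≥ (q-1)·c`.
Suppose `λ ∈ A[[u]]` has zero constant coefficient and satisfies the kernel-order bound
`c` modulo `u^N` for all `1 ≤ N ≤ r+1`; let `ω ∈ A` with `ω^q = 0`.  If
`α ≡ β·(λ + ω) mod u^{r+1}` for some constant `α` and some `β ∈ A[[u]]`, then `α = 0`. -/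
theorem lens_space_pullback_injectivity {A : Type*} [CommRing A]
    (q : ℕ) (hq : 1 ≤ q) (c r : ℕ) (hr : (q - 1) * c ≤ r)
    (lam : PowerSeries A) (hlam : PowerSeries.constantCoeff (R := A) lam = 0)
    (hker : ∀ N : ℕ, 1 ≤ N → N ≤ r + 1 → ∀ x : PowerSeries A,
      (∀ i < N, PowerSeries.coeff (R := A) i (lam * x) = 0) →
      ∀ i < N - c, PowerSeries.coeff (R := A) i x = 0)
    (ω : A) (hω : ω ^ q = 0) (β : PowerSeries A) (α : A)
    (hcong : ∀ i < r + 1,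
      PowerSeries.coeff (R := A) i
        (PowerSeries.C (R := A) α - β * (lam + PowerSeries.C (R := A) ω)) = 0) :
    α = 0 :=
  lens_space_pullback_injectivity_general q c r hr lam hlam hker ω hω β α hcong
end
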